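/- Let X be a Baire space and Y a Valdivia compact, i.e., Y embeds into some [0,1]^T so that Y ∩ Σ is dense in Y, where Σ is the set of points of [0,1]^T with countable support. Let f : X × Y → ℝ be continuous in the second variable, and suppose there is a dense G_δ set B₁ ⊆ Y such that x ↦ f(x,b) is quasi-continuous for each b ∈ B₁. Then f has the Namioka property. -/

import Mathlib

open Topology

/-- A map is quasi-continuous at `x₀` if every neighborhood of `x₀` contains a nonempty open
set mapped into any prescribed neighborhood of `f x₀`. -/
def QuasiContinuousAt {X Y : Type*} [TopologicalSpace X] [TopologicalSpace Y]
    (f : X → Y) (x₀ : X) : Prop :=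
  ∀ U ∈ 𝓝 x₀, ∀ V ∈ 𝓝 (f x₀), ∃ G : Set X, IsOpen G ∧ G.Nonempty ∧ G ⊆ U ∧ f '' G ⊆ V

/-- A map is quasi-continuous if it is quasi-continuous at every point. -/
def QuasiContinuous {X Y : Type*} [TopologicalSpace X] [TopologicalSpace Y]
    (f : X → Y) : Prop :=
  ∀ x : X, QuasiContinuousAt f x

/-- `f : X × Y → Z` has the Namioka property if there is a dense `Gδ` set `A ⊆ X` such that
`f` is jointly continuous at every point of `A × Y`. -/
def NamiokaProperty {X Y Z : Type*} [TopologicalSpace X] [TopologicalSpace Y]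
    [TopologicalSpace Z] (f : X × Y → Z) : Prop :=
  ∃ A : Set X, Dense A ∧ IsGδ A ∧ ∀ x ∈ A, ∀ y : Y, ContinuousAt f (x, y)

/-- `Y` is a Kempisty space if for every Baire space `X`, every `f : X × Y → ℝ`
quasi-continuous in the first variable and continuous in the second has the Namioka property. -/
def KempistySpace (Y : Type*) [TopologicalSpace Y] : Prop :=
  ∀ (X : Type*) (_ : TopologicalSpace X), BaireSpace X →
    ∀ f : X × Y → ℝ,
      (∀ y : Y, QuasiContinuous fun x => f (x, y)) →
      (∀ x : X, Continuous fun y => f (x, y)) →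
      NamiokaProperty f

/-!
For `ε > 0` let `E_ε` be the open set of points having a neighbourhood on which the sections
`f (·, y)` oscillate by at most `ε`, uniformly in `y`; `f` is jointly continuous on
`⋂ₙ E_{1/n} × Y`, so it suffices that every `E_ε` is dense. The points of `B₁` with countable support form a dense
set `B` (the countable-support points are closed under limits of sequences).

If an open `W` missed `E_ε`, play a Banach–Mazur game inside `W`, keeping a countable set `S` of
coordinates for which the projection `r_S` (restriction to `S`, extended by `0`) maps `Y` onto a
compact metrizable subset in which `B` is dense. Baire category in `C(r_S Y, ℝ)` and
quasi-continuity shrink any move to an open set on which the sections oscillate little on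
`r_S Y`; failure of `E_ε` yields `b ∈ B` with a gap between `f (·, b)` and `f (·, r_S b)` that
persists on a smaller open set, and `S` is then enlarged by the support of `b`. As `X` is Baire,
some `x` survives the whole play, so `|f (x, bₙ) - f (x, r_{Sₙ} bₙ)| ≥ ε / 8` for all `n`; but
`r_{Sₙ} bₙ` and `bₙ` eventually agree in each coordinate, contradicting the uniform continuity of
`f (x, ·)` on the compact space `Y`.
-/

open Set Filter Function Uniformity

section Oscillation

variable {X Y : Type*}

def OscillationLE (f : X × Y → ℝ) (U : Set X) (K : Set Y) (ε : ℝ) : Prop :=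
  ∀ x₁ ∈ U, ∀ x₂ ∈ U, ∀ y ∈ K, |f (x₁, y) - f (x₂, y)| ≤ ε

def lowOscillationSet [TopologicalSpace X] (f : X × Y → ℝ) (ε : ℝ) : Set X :=
  {x | ∃ U, IsOpen U ∧ x ∈ U ∧ OscillationLE f U univ ε}

variable {f : X × Y → ℝ}

theorem OscillationLE.of_subset_closure [TopologicalSpace Y]
    (hf : ∀ x, Continuous fun y => f (x, y)) {U : Set X} {D K : Set Y} {ε : ℝ}
    (h : OscillationLE f U D ε) (hK : K ⊆ closure D) : OscillationLE f U K ε :=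
  fun x₁ h₁ x₂ h₂ _ hy => closure_minimal (fun d hd => h x₁ h₁ x₂ h₂ d hd)
    (isClosed_le ((hf x₁).sub (hf x₂)).abs continuous_const) (hK hy)

variable [TopologicalSpace X]

theorem isOpen_lowOscillationSet (ε : ℝ) : IsOpen (lowOscillationSet f ε) :=
  isOpen_iff_forall_mem_open.2 fun _ ⟨U, hU, hxU, h⟩ =>
    ⟨U, fun _ hx' => ⟨U, hU, hx', h⟩, hU, hxU⟩

theorem lowOscillationSet_mono {ε ε' : ℝ} (h : ε ≤ ε') :
    lowOscillationSet f ε ⊆ lowOscillationSet f ε' :=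
  fun _ ⟨U, hU, hxU, hosc⟩ =>
    ⟨U, hU, hxU, fun x₁ h₁ x₂ h₂ y hy => (hosc x₁ h₁ x₂ h₂ y hy).trans h⟩

theorem continuousAt_of_forall_mem_lowOscillationSet [TopologicalSpace Y] {x : X}
    (hf : Continuous fun y => f (x, y)) (hx : ∀ ε > 0, x ∈ lowOscillationSet f ε) (y : Y) :
    ContinuousAt f (x, y) := by
  rw [ContinuousAt, Metric.tendsto_nhds]
  intro ε hε
  obtain ⟨U, hU, hxU, hosc⟩ := hx (ε / 2) (half_pos hε)
  have hy : ∀ᶠ y' in 𝓝 y, dist (f (x, y')) (f (x, y)) < ε / 2 :=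
    Metric.tendsto_nhds.1 (hf.tendsto y) _ (half_pos hε)
  filter_upwards [prod_mem_nhds (hU.mem_nhds hxU) hy] with ⟨x', y'⟩ ⟨hx', hy'⟩
  have hx'y' : dist (f (x', y')) (f (x, y')) ≤ ε / 2 := hosc x' hx' x hxU y' (mem_univ _)
  have hy'' : dist (f (x, y')) (f (x, y)) < ε / 2 := hy'
  linarith [dist_triangle (f (x', y')) (f (x, y')) (f (x, y))]

end Oscillation

section Baire

variable {X Y : Type*} [TopologicalSpace X] [TopologicalSpace Y]

theorem QuasiContinuousAt.mem_closure_image {g : X → Y} {x : X} (hg : QuasiContinuousAt g x)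
    {A : Set X} (hx : x ∈ interior (closure A)) : g x ∈ closure (g '' A) := by
  refine mem_closure_iff_nhds.2 fun V hV => ?_
  obtain ⟨G, hGo, ⟨a, ha⟩, hGA, hGV⟩ := hg _ (isOpen_interior.mem_nhds hx) V hV
  obtain ⟨a', ha'G, ha'A⟩ := mem_closure_iff.1 (interior_subset (hGA ha)) G hGo ha
  exact ⟨g a', hGV (mem_image_of_mem g ha'G), mem_image_of_mem g ha'A⟩

theorem exists_isOpen_oscillationLE [BaireSpace X] [T2Space Y] {f : X × Y → ℝ}
    (hf : ∀ x, Continuous fun y => f (x, y)) {K D : Set Y} (hK : IsCompact K)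
    [SecondCountableTopology K] (hDK : D ⊆ K) (hKD : K ⊆ closure D)
    (hqc : ∀ d ∈ D, QuasiContinuous fun x => f (x, d)) {ε : ℝ} (hε : 0 < ε)
    {V : Set X} (hV : IsOpen V) (hVne : V.Nonempty) :
    ∃ U ⊆ V, IsOpen U ∧ U.Nonempty ∧ OscillationLE f U K ε := by
  have : CompactSpace K := isCompact_iff_compactSpace.1 hK
  let F : X → C(K, ℝ) := fun x => ⟨fun k => f (x, k), (hf x).comp continuous_subtype_val⟩
  -- `C(K, ℝ)` is separable, so countably many closed balls of radius `ε / 2` cover it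
  obtain ⟨Q, hQc, hQd⟩ := TopologicalSpace.exists_countable_dense C(K, ℝ)
  have := hQc.to_subtype
  let A : Q → Set X := fun q => {x | dist (F x) q ≤ ε / 2}
  have hcover : ⋃ q, closure (A q) = univ := by
    refine eq_univ_of_forall fun x => ?_
    obtain ⟨q, hq, hxq⟩ := hQd.exists_dist_lt (F x) (half_pos hε)
    exact mem_iUnion.2 ⟨⟨q, hq⟩, subset_closure hxq.le⟩
  obtain ⟨x₀, hx₀V, hx₀⟩ := (dense_iUnion_interior_of_closed (fun _ => isClosed_closure)
    hcover).inter_open_nonempty V hV hVne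
  obtain ⟨q, hx₀q⟩ := mem_iUnion.1 hx₀
  refine ⟨V ∩ interior (closure (A q)), inter_subset_left, hV.inter isOpen_interior,
    ⟨x₀, hx₀V, hx₀q⟩, ?_⟩
  have hnear : ∀ x ∈ V ∩ interior (closure (A q)), ∀ d (hd : d ∈ D),
      |f (x, d) - q.1 ⟨d, hDK hd⟩| ≤ ε / 2 := by
    intro x hx d hd
    have hball : IsClosed {r : ℝ | |r - q.1 ⟨d, hDK hd⟩| ≤ ε / 2} :=
      isClosed_le (continuous_id.sub continuous_const).abs continuous_const
    refine closure_minimal ?_ hball ((hqc d hd x).mem_closure_image hx.2)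
    rintro _ ⟨a, ha, rfl⟩
    exact (ContinuousMap.dist_apply_le_dist (f := F a) (g := q.1) ⟨d, hDK hd⟩).trans ha
  refine OscillationLE.of_subset_closure hf (fun x₁ h₁ x₂ h₂ d hd => ?_) hKD
  have h₁ := hnear x₁ h₁ d hd
  have h₂ := hnear x₂ h₂ d hd
  rw [abs_le] at *
  constructor <;> linarith

end Baire

section BanachMazur

variable {X P : Type*} [TopologicalSpace X]

theorem exists_mem_inter_iInter_of_subset_closure [BaireSpace X] {O : Set X} (hO : IsOpen O)
    (hOne : O.Nonempty) {D : ℕ → Set X} (hD : ∀ n, IsOpen (D n)) (hOD : ∀ n, O ⊆ closure (D n)) :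
    ∃ x ∈ O, ∀ n, x ∈ D n := by
  have hdense : ∀ n, Dense (D n ∪ (closure O)ᶜ) := fun n x => by
    by_cases hx : x ∈ closure O
    · exact closure_mono subset_union_left (closure_minimal (hOD n) isClosed_closure hx)
    · exact subset_closure (Or.inr hx)
  obtain ⟨x, hxO, hx⟩ := (dense_iInter_of_isOpen
    (fun n => (hD n).union isClosed_closure.isOpen_compl) hdense).inter_open_nonempty O hO hOne
  exact ⟨x, hxO, fun n => (mem_iInter.1 hx n).resolve_right (not_not.2 (subset_closure hxO))⟩

theorem exists_pairwiseDisjoint_subset_closure {s : P → Set X} {𝓡 : Set P} {O : Set X}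
    (hs : ∀ q ∈ 𝓡, (s q).Nonempty) (hO : IsOpen O)
    (h : ∀ V, IsOpen V → V.Nonempty → V ⊆ O → ∃ q ∈ 𝓡, s q ⊆ V) :
    ∃ 𝒬 ⊆ 𝓡, 𝒬.PairwiseDisjoint s ∧ O ⊆ closure (⋃ q ∈ 𝒬, s q) := by
  obtain ⟨𝒬, ⟨h𝒬𝓡, h𝒬⟩, hmax⟩ := zorn_subset {𝒬 | 𝒬 ⊆ 𝓡 ∧ 𝒬.PairwiseDisjoint s}
    fun c hc hchain => ⟨⋃₀ c, ⟨sUnion_subset fun _ h𝒬 => (hc h𝒬).1,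
      (hchain.pairwiseDisjoint_sUnion s).2 fun _ h𝒬 => (hc h𝒬).2⟩, fun _ => subset_sUnion_of_mem⟩
  refine ⟨𝒬, h𝒬𝓡, h𝒬, fun x hx => mem_closure_iff.2 fun N hN hxN => ?_⟩
  obtain ⟨q, hq𝓡, hqN⟩ := h (N ∩ O) (hN.inter hO) ⟨x, hxN, hx⟩ inter_subset_right
  by_contra hdisj
  have hq : ∀ q' ∈ 𝒬, Disjoint (s q) (s q') := fun q' hq' =>
    disjoint_left.2 fun y hyq hyq' =>
      hdisj ⟨y, (hqN hyq).1, mem_iUnion₂.2 ⟨q', hq', hyq'⟩⟩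
  have hq𝒬 : q ∉ 𝒬 := fun hq𝒬 => (hs q hq𝓡).ne_empty (disjoint_self.1 (hq q hq𝒬))
  exact hq𝒬 (hmax ⟨insert_subset hq𝓡 h𝒬𝓡, h𝒬.insert fun q' hq' _ => hq q' hq'⟩
    (subset_insert q 𝒬) (mem_insert q 𝒬))

/-- Banach–Mazur game: in a Baire space, the player answering open sets by smaller ones cannot
force an empty intersection. -/
theorem exists_mem_play_of_baireSpace [BaireSpace X] (s : P → Set X) (I : P → Prop)
    (R : P → P → Prop) {p₀ : P} (h₀ : I p₀) (hs : ∀ p, I p → IsOpen (s p) ∧ (s p).Nonempty)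
    (hR : ∀ p, I p → ∀ V, IsOpen V → V.Nonempty → V ⊆ s p → ∃ q, I q ∧ R p q ∧ s q ⊆ V) :
    ∃ x, ∃ p : ℕ → P, p 0 = p₀ ∧ ∀ n, R (p n) (p (n + 1)) ∧ x ∈ s (p n) := by
  have hfam : ∀ p, I p → ∃ 𝒬 ⊆ {q | I q ∧ R p q ∧ s q ⊆ s p},
      𝒬.PairwiseDisjoint s ∧ s p ⊆ closure (⋃ q ∈ 𝒬, s q) := fun p hp =>
    exists_pairwiseDisjoint_subset_closure (fun q hq => (hs q hq.1).2) (hs p hp).1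
      fun V hV hVne hVp =>
        let ⟨q, hq, hRq, hqV⟩ := hR p hp V hV hVne hVp
        ⟨q, ⟨hq, hRq, hqV.trans hVp⟩, hqV⟩
  choose! 𝒬 h𝒬 h𝒬disj h𝒬dense using hfam
  -- the `n`-th level of the tree of maximal answers; its open sets are pairwise disjoint
  let A : ℕ → Set P := fun n => Nat.rec {p₀} (fun _ A => ⋃ p ∈ A, 𝒬 p) n
  have hA : ∀ n, (∀ p ∈ A n, I p) ∧ (A n).PairwiseDisjoint s := by
    intro n
    induction n with
    | zero => exact ⟨fun p hp => (mem_singleton_iff.1 hp) ▸ h₀, pairwiseDisjoint_singleton _ _⟩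
    | succ n ih =>
      refine ⟨fun q hq => ?_, ?_⟩
      · obtain ⟨p, hp, hq⟩ := mem_iUnion₂.1 hq
        exact (h𝒬 p (ih.1 p hp) hq).1
      · refine PairwiseDisjoint.biUnion (ih.2.mono_on fun p hp => ?_)
          fun p hp => h𝒬disj p (ih.1 p hp)
        exact iSup₂_le fun q hq => (h𝒬 p (ih.1 p hp) hq).2.2
  have hD : ∀ n, s p₀ ⊆ closure (⋃ p ∈ A n, s p) := by
    intro n
    induction n with
    | zero => simpa [A] using subset_closure
    | succ n ih =>
      refine ih.trans (closure_minimal (iUnion₂_subset fun p hp => (h𝒬dense p ((hA n).1 p hp)).trans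
        (closure_mono ?_)) isClosed_closure)
      exact biUnion_subset_biUnion_left (subset_biUnion_of_mem (u := 𝒬) hp)
  obtain ⟨x, hx₀, hx⟩ := exists_mem_inter_iInter_of_subset_closure (hs p₀ h₀).1 (hs p₀ h₀).2
    (fun n => isOpen_biUnion fun p hp => (hs p ((hA n).1 p hp)).1) hD
  have hstep : ∀ n, ∀ p ∈ A n, x ∈ s p → ∃ q ∈ 𝒬 p, x ∈ s q := by
    intro n p hp hxp
    obtain ⟨q, hq, hxq⟩ := mem_iUnion₂.1 (hx (n + 1))
    obtain ⟨p', hp', hqp'⟩ := mem_iUnion₂.1 hq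
    have hxp' : x ∈ s p' := (h𝒬 p' ((hA n).1 p' hp') hqp').2.2 hxq
    obtain rfl : p' = p := (hA n).2.elim hp' hp (not_disjoint_iff.2 ⟨x, hxp', hxp⟩)
    exact ⟨q, hqp', hxq⟩
  choose! next hnext hxnext using hstep
  let p : ℕ → P := fun n => Nat.rec p₀ (fun n q => next n q) n
  have hp : ∀ n, p n ∈ A n ∧ x ∈ s (p n) := by
    intro n
    induction n with
    | zero => exact ⟨rfl, hx₀⟩
    | succ n ih => exact ⟨mem_biUnion ih.1 (hnext n _ ih.1 ih.2), hxnext n _ ih.1 ih.2⟩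
  exact ⟨x, p, rfl, fun n =>
    ⟨(h𝒬 _ ((hA n).1 _ (hp n).1) (hnext n _ (hp n).1 (hp n).2)).2.1, (hp n).2⟩⟩

end BanachMazur

section CountablyClosed

variable {Y : Type*} [TopologicalSpace Y] [CompactSpace Y] [RegularSpace Y]

theorem Dense.inter_of_isGδ_of_closure_range_subset {D G : Set Y} (hD : Dense D)
    (hDcl : ∀ z : ℕ → Y, (∀ n, z n ∈ D) → closure (range z) ⊆ D) (hGd : Dense G)
    (hG : IsGδ G) : Dense (G ∩ D) := by
  obtain ⟨U, hUo, rfl⟩ := hG.eq_iInter_nat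
  refine dense_iff_inter_open.2 fun O hO hOne => ?_
  have : Nonempty Y := ⟨hOne.some⟩
  have hstep : ∀ (n : ℕ) (V : Set Y), IsOpen V → V.Nonempty →
      ∃ V' z, IsOpen V' ∧ z ∈ V' ∧ z ∈ D ∧ closure V' ⊆ V ∩ U n := by
    intro n V hV hVne
    obtain ⟨z, hzVU, hzD⟩ := hD.inter_open_nonempty _ (hV.inter (hUo n))
      ((hGd.mono (iInter_subset U n)).inter_open_nonempty V hV hVne)
    obtain ⟨t, ht, htc, htVU⟩ := exists_mem_nhds_isClosed_subset
      ((hV.inter (hUo n)).mem_nhds hzVU)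
    exact ⟨interior t, z, isOpen_interior, mem_interior_iff_mem_nhds.2 ht, hzD,
      (closure_minimal interior_subset htc).trans htVU⟩
  choose! next z hnext hznext hzD hnextsub using hstep
  let W : ℕ → Set Y := fun n => Nat.rec O (fun n V => next n V) n
  have hW : ∀ n, IsOpen (W n) ∧ (W n).Nonempty := by
    intro n
    induction n with
    | zero => exact ⟨hO, hOne⟩
    | succ n ih => exact ⟨hnext n _ ih.1 ih.2, _, hznext n _ ih.1 ih.2⟩
  have hWsub : ∀ n, closure (W (n + 1)) ⊆ W n ∩ U n := fun n => hnextsub n _ (hW n).1 (hW n).2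
  have hWanti : Antitone W :=
    antitone_nat_of_succ_le fun n => subset_closure.trans ((hWsub n).trans inter_subset_left)
  let zs : ℕ → Y := fun n => z n (W n)
  obtain ⟨y, hy⟩ := exists_clusterPt_of_compactSpace (map zs atTop)
  have hyW : ∀ n, y ∈ W n ∩ U n := fun n => hWsub n <| mem_closure_iff_clusterPt.2 <|
    hy.mono <| le_principal_iff.2 <| mem_map.2 <| mem_atTop_sets.2
      ⟨n, fun k hk => hWanti (Nat.succ_le_succ hk) (hznext k _ (hW k).1 (hW k).2)⟩
  exact ⟨y, (hyW 0).1, mem_iInter.2 fun n => (hyW n).2, hDcl zs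
    (fun n => hzD n _ (hW n).1 (hW n).2)
    (mem_closure_iff_clusterPt.2 (hy.mono (le_principal_iff.2 range_mem_map)))⟩

end CountablyClosed

theorem exists_countable_subset_image_subset_closure {α β : Type*} [TopologicalSpace β]
    [TopologicalSpace.SeparableSpace β] [TopologicalSpace.PseudoMetrizableSpace β] (π : α → β)
    (B : Set α) :
    ∃ M ⊆ B, M.Countable ∧ π '' B ⊆ closure (π '' M) := by
  obtain ⟨t, htB, htc, hBt⟩ :=
    (TopologicalSpace.IsSeparable.of_separableSpace (π '' B)).exists_countable_dense_subset
  obtain ⟨M, hMB, hM⟩ := SurjOn.exists_bijOn_subset htB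
  exact ⟨M, hMB, hM.mapsTo.countable_of_injOn hM.injOn htc, hM.image_eq ▸ hBt⟩

theorem indicator_iUnion_mem_closure {T : Type*} {S : ℕ → Set T} (hS : Monotone S)
    {A : Set (T → ℝ)} (hA : ∀ a ∈ A, support a ⊆ ⋃ n, S n) {u : T → ℝ}
    (hu : ∀ n, (S n).indicator u ∈ closure ((S n).indicator '' A)) :
    (⋃ n, S n).indicator u ∈ closure A := by
  classical
  refine mem_closure_iff.2 fun O hO huO => ?_
  obtain ⟨I, w, hw, hIO⟩ := isOpen_pi_iff.1 hO _ huO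
  obtain ⟨n, hn⟩ := hS.directed_le.exists_mem_subset_of_finset_subset_biUnion
    (s := I.filter (· ∈ ⋃ n, S n)) fun t ht => (Finset.mem_filter.1 ht).2
  have hIn : ∀ t ∈ I, t ∉ S n → t ∉ ⋃ n, S n := fun t htI htn ht =>
    htn (hn (Finset.mem_filter.2 ⟨htI, ht⟩))
  have hO' : IsOpen ((↑I ∩ S n).pi w) :=
    isOpen_set_pi (I.finite_toSet.inter_of_left _) fun t ht => (hw t ht.1).1
  have huO' : (S n).indicator u ∈ (↑I ∩ S n).pi w := fun t ⟨htI, htn⟩ => by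
    simpa [indicator_of_mem htn, indicator_of_mem (mem_iUnion_of_mem n htn)] using (hw t htI).2
  obtain ⟨_, haO', a, ha, rfl⟩ := mem_closure_iff.1 (hu n) _ hO' huO'
  refine ⟨a, hIO fun t htI => ?_, ha⟩
  by_cases htn : t ∈ S n
  · simpa [indicator_of_mem htn] using haO' t ⟨htI, htn⟩
  · have ht := hIn t htI htn
    rw [notMem_support.1 fun h => ht (hA a ha h)]
    simpa [indicator_of_notMem ht] using (hw t htI).2

section Valdivia

variable {Y T : Type*} [TopologicalSpace Y] {e : Y → T → ℝ} {B : Set Y}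

theorem support_subset_of_mem_closure (he : Continuous e) {A : Set Y} {y : Y}
    (hy : y ∈ closure A) : support (e y) ⊆ ⋃ a ∈ A, support (e a) := by
  intro t ht
  by_contra hA
  simp only [mem_iUnion, mem_support, not_exists, not_not] at hA
  exact ht (closure_minimal (fun a ha => hA a ha)
    (isClosed_eq ((continuous_apply t).comp he) continuous_const) hy)

theorem isClosed_setOf_support_subset (he : Continuous e) (S : Set T) :
    IsClosed {y | support (e y) ⊆ S} :=
  isClosed_of_closure_subset fun _ hy =>
    (support_subset_of_mem_closure he hy).trans (iUnion₂_subset fun _ ha => ha)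

theorem secondCountableTopology_setOf_support_subset [CompactSpace Y] (he : IsEmbedding e)
    {S : Set T} (hS : S.Countable) : SecondCountableTopology {y | support (e y) ⊆ S} := by
  have := hS.to_subtype
  have : CompactSpace {y | support (e y) ⊆ S} :=
    isCompact_iff_compactSpace.1 (isClosed_setOf_support_subset he.continuous S).isCompact
  let π : {y | support (e y) ⊆ S} → (S → ℝ) := fun y t => e y t
  have hπ : Continuous π :=
    continuous_pi fun t => (continuous_apply t.1).comp (he.continuous.comp continuous_subtype_val)
  refine (hπ.isClosedEmbedding fun y y' hyy' => Subtype.ext (he.injective (funext fun t => ?_)))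
    |>.isEmbedding.secondCountableTopology
  by_cases ht : t ∈ S
  · exact congrFun hyy' ⟨t, ht⟩
  · rw [notMem_support.1 fun h => ht (y.2 h), notMem_support.1 fun h => ht (y'.2 h)]

theorem exists_countable_indicator_mem_closure (he : Continuous e) (hBd : Dense B)
    {S : Set T} (hS : S.Countable) :
    ∃ M ⊆ B, M.Countable ∧
      ∀ y, S.indicator (e y) ∈ closure ((fun m => S.indicator (e m)) '' M) := by
  classical
  have := hS.to_subtype
  let π : Y → (S → ℝ) := fun y t => e y t
  have hπ : Continuous π := continuous_pi fun t => (continuous_apply t.1).comp he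
  let ext : (S → ℝ) → (T → ℝ) := fun v t => if h : t ∈ S then v ⟨t, h⟩ else 0
  have hext : Continuous ext := continuous_pi fun t => by
    by_cases h : t ∈ S
    · simpa [ext, h] using continuous_apply (⟨t, h⟩ : S)
    · simpa [ext, h] using continuous_const
  have hextπ : ∀ y, ext (π y) = S.indicator (e y) := fun y => funext fun t => by
    by_cases h : t ∈ S <;> simp [ext, π, h]
  obtain ⟨M, hMB, hMc, hM⟩ := exists_countable_subset_image_subset_closure π B
  refine ⟨M, hMB, hMc, fun y => ?_⟩
  have hy : π y ∈ closure (π '' M) :=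
    closure_minimal hM isClosed_closure (image_closure_subset_closure_image hπ
      (mem_image_of_mem π (hBd y)))
  simpa [hextπ, image_image] using mem_closure_image hext.continuousAt hy

/-- `S.indicator` is the coordinate projection `r_S` of `ℝ^T`: an admissible `S` is a countable
set of coordinates such that `r_S` maps `Y` into itself and the points of `B` are dense in the
compact metrizable set `r_S(Y)` of points supported in `S`. -/
structure IsAdmissible (e : Y → T → ℝ) (B : Set Y) (S : Set T) : Prop where
  countable : S.Countable
  indicator_mem_range : ∀ y, S.indicator (e y) ∈ range e
  subset_closure : {y | support (e y) ⊆ S} ⊆ closure (B ∩ {y | support (e y) ⊆ S})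

theorem exists_isAdmissible [CompactSpace Y] (he : IsEmbedding e) (hBd : Dense B)
    (hB : ∀ b ∈ B, (support (e b)).Countable) {S₀ : Set T} (hS₀ : S₀.Countable) :
    ∃ S, S₀ ⊆ S ∧ IsAdmissible e B S := by
  choose! M hMB hMc hM using fun (S : Set T) (hS : S.Countable) =>
    exists_countable_indicator_mem_closure he.continuous hBd hS
  let S : ℕ → Set T := fun n => Nat.rec S₀ (fun _ S => S ∪ ⋃ m ∈ M S, support (e m)) n
  have hSc : ∀ n, (S n).Countable := by
    intro n
    induction n with
    | zero => exact hS₀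
    | succ n ih => exact ih.union ((hMc _ ih).biUnion fun m hm => hB m (hMB _ ih hm))
  have hSmono : Monotone S := monotone_nat_of_le_succ fun n => subset_union_left
  have hMsupp : ∀ m ∈ ⋃ n, M (S n), support (e m) ⊆ ⋃ n, S n := by
    intro m hm
    obtain ⟨n, hmn⟩ := mem_iUnion.1 hm
    exact (subset_biUnion_of_mem (u := fun m => support (e m)) hmn).trans
      (subset_union_right.trans (subset_iUnion S (n + 1)))
  have hclos : ∀ y, (⋃ n, S n).indicator (e y) ∈ closure (e '' ⋃ n, M (S n)) := fun y =>
    indicator_iUnion_mem_closure hSmono (by rintro _ ⟨m, hm, rfl⟩; exact hMsupp m hm)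
      fun n => closure_mono (by rw [image_image]; exact image_mono (subset_iUnion (M ∘ S) n))
        (hM _ (hSc n) y)
  refine ⟨⋃ n, S n, subset_iUnion S 0, countable_iUnion hSc, fun y => ?_, fun y hy => ?_⟩
  · exact closure_minimal (image_subset_range _ _) (isCompact_range he.continuous).isClosed
      (hclos y)
  · rw [he.closure_eq_preimage_closure_image, mem_preimage, ← indicator_eq_self.2 hy]
    refine closure_mono (image_mono (fun m hm => ⟨?_, hMsupp m hm⟩ :
      ⋃ n, M (S n) ⊆ B ∩ {y | support (e y) ⊆ ⋃ n, S n})) (hclos y)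
    obtain ⟨n, hmn⟩ := mem_iUnion.1 hm
    exact hMB _ (hSc n) hmn

end Valdivia

theorem tendsto_uniformity_of_isEmbedding {ι Y Z W : Type*} [TopologicalSpace Y] [CompactSpace Y]
    [UniformSpace Z] [UniformSpace W] {e : Y → Z} (he : IsEmbedding e) {g : Y → W}
    (hg : Continuous g) {l : Filter ι} {u v : ι → Y}
    (h : Tendsto (fun i => (e (u i), e (v i))) l (𝓤 Z)) :
    Tendsto (fun i => (g (u i), g (v i))) l (𝓤 W) := by
  -- a compact space carries a unique uniformity, here the one pulled back along `e`
  let : UniformSpace Y := (UniformSpace.comap e ‹_›).replaceTopology he.eq_induced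
  exact Tendsto.comp (CompactSpace.uniformContinuous_of_continuous hg)
    ((tendsto_comap_iff (f := fun i => (u i, v i))).2 h :
      Tendsto _ l (comap (Prod.map e e) (𝓤 Z)))

theorem tendsto_pi_uniformity_of_eventually_eq {ι T W : Type*} [UniformSpace W] {l : Filter ι}
    {a b : ι → T → W} (h : ∀ t, ∀ᶠ i in l, a i t = b i t) :
    Tendsto (fun i => (a i, b i)) l (𝓤 (T → W)) := by
  rw [Pi.uniformity, tendsto_iInf]
  exact fun t => tendsto_comap_iff.2 ((tendsto_principal.2 (h t)).mono_right refl_le_uniformity)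

theorem eventually_apply_eq_of_eq_indicator {T : Type*} {S : ℕ → Set T} (hS : Monotone S)
    {a b : ℕ → T → ℝ} (hb : ∀ n, b n = (S n).indicator (a n))
    (ha : ∀ n, support (a n) ⊆ S (n + 1)) (t : T) : ∀ᶠ n in atTop, a n t = b n t := by
  by_cases ht : ∃ m, t ∈ S m
  · obtain ⟨m, hm⟩ := ht
    filter_upwards [eventually_ge_atTop m] with n hn
    rw [hb, indicator_of_mem (hS hn hm)]
  · push Not at ht
    refine Eventually.of_forall fun n => ?_
    rw [hb, indicator_of_notMem (ht n), notMem_support.1 fun h => ht (n + 1) (ha n h)]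

section Density

variable {X Y T : Type*} [TopologicalSpace X] [BaireSpace X] [TopologicalSpace Y] [CompactSpace Y]
  {e : Y → T → ℝ} {f : X × Y → ℝ} {B : Set Y}

theorem exists_isOpen_gap_of_isAdmissible (he : IsEmbedding e)
    (hf : ∀ x, Continuous fun y => f (x, y))
    (hBqc : ∀ b ∈ B, QuasiContinuous fun x => f (x, b)) {ε : ℝ} (hε : 0 < ε) {S : Set T}
    (hS : IsAdmissible e B S) {V : Set X} (hV : IsOpen V) (hVne : V.Nonempty)
    (hVosc : ∀ U ⊆ V, IsOpen U → U.Nonempty → ¬ OscillationLE f U B ε) :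
    ∃ b ∈ B, ∃ y, e y = S.indicator (e b) ∧
      ∃ G ⊆ V, IsOpen G ∧ G.Nonempty ∧ ∀ x ∈ G, ε / 8 < |f (x, b) - f (x, y)| := by
  have : T2Space Y := he.t2Space
  have := secondCountableTopology_setOf_support_subset he hS.countable
  obtain ⟨U, hUV, hUo, hUne, hUosc⟩ := exists_isOpen_oscillationLE hf
    (isClosed_setOf_support_subset he.continuous S).isCompact inter_subset_right hS.subset_closure
    (fun d hd => hBqc d hd.1) (by positivity : 0 < ε / 8) hV hVne
  obtain ⟨x₁, hx₁, x₂, hx₂, b, hb, hgap⟩ : ∃ x₁ ∈ U, ∃ x₂ ∈ U, ∃ b ∈ B,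
      ε < |f (x₁, b) - f (x₂, b)| := by
    simpa [OscillationLE] using hVosc U hUV hUo hUne
  obtain ⟨y, hy⟩ := hS.indicator_mem_range b
  have hyS : support (e y) ⊆ S := hy ▸ support_indicator_subset
  -- `f (·, y)` oscillates by at most `ε / 8` on `U`, so the gap `ε` of `f (·, b)` between `x₁`
  -- and `x₂` leaves a gap of `3ε / 8` between `b` and `y` at `x₁` or at `x₂`
  obtain ⟨z, hzU, hz⟩ : ∃ z ∈ U, 3 * ε / 8 < |f (z, b) - f (z, y)| := by
    have hy₁₂ := abs_le.1 (hUosc x₁ hx₁ x₂ hx₂ y hyS)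
    by_contra! h
    have h₁ := abs_le.1 (h x₁ hx₁)
    have h₂ := abs_le.1 (h x₂ hx₂)
    rcases lt_abs.1 hgap with hgap | hgap <;> linarith [h₁.1, h₁.2, h₂.1, h₂.2, hy₁₂.1, hy₁₂.2]
  obtain ⟨G, hGo, hGne, hGU, hGb⟩ := hBqc b hb z U (hUo.mem_nhds hzU) _
    (Metric.ball_mem_nhds (f (z, b)) (by positivity : 0 < ε / 8))
  refine ⟨b, hb, y, hy, G, hGU.trans hUV, hGo, hGne, fun x hx => ?_⟩
  have hb' := abs_lt.1 (mem_ball_iff_norm.1 (hGb (mem_image_of_mem _ hx)))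
  have hy' := abs_le.1 (hUosc x (hGU hx) z hzU y hyS)
  rcases lt_abs.1 hz with hz | hz
  · exact lt_abs.2 (Or.inl (by linarith [hb'.1, hy'.1, hy'.2]))
  · exact lt_abs.2 (Or.inr (by linarith [hb'.2, hy'.1, hy'.2]))

theorem dense_lowOscillationSet (he : IsEmbedding e)
    (hf : ∀ x, Continuous fun y => f (x, y)) (hBd : Dense B)
    (hB : ∀ b ∈ B, (support (e b)).Countable)
    (hBqc : ∀ b ∈ B, QuasiContinuous fun x => f (x, b)) {ε : ℝ} (hε : 0 < ε) :
    Dense (lowOscillationSet f ε) := by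
  refine dense_iff_inter_open.2 fun W hW hWne => ?_
  by_contra hempty
  have hWosc : ∀ U ⊆ W, IsOpen U → U.Nonempty → ¬ OscillationLE f U B ε :=
    fun U hUW hU ⟨x, hx⟩ hosc => hempty
      ⟨x, hUW hx, U, hU, hx, hosc.of_subset_closure hf fun y _ => hBd y⟩
  obtain ⟨S₀, -, hS₀⟩ := exists_isAdmissible he hBd hB countable_empty
  let I : Set T × Set X → Prop := fun p =>
    IsAdmissible e B p.1 ∧ IsOpen p.2 ∧ p.2.Nonempty ∧ p.2 ⊆ W
  let R : Set T × Set X → Set T × Set X → Prop := fun p q => p.1 ⊆ q.1 ∧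
    ∃ b y, support (e b) ⊆ q.1 ∧ e y = p.1.indicator (e b) ∧
      ∀ x ∈ q.2, ε / 8 < |f (x, b) - f (x, y)|
  have hanswer : ∀ p, I p → ∀ V, IsOpen V → V.Nonempty → V ⊆ p.2 →
      ∃ q, I q ∧ R p q ∧ q.2 ⊆ V := by
    rintro ⟨S, G⟩ ⟨hS, -, -, hGW⟩ V hV hVne hVG
    obtain ⟨b, hb, y, hy, G', hG'V, hG'o, hG'ne, hgap⟩ := exists_isOpen_gap_of_isAdmissible he
      hf hBqc hε hS hV hVne fun U hUV => hWosc U (hUV.trans (hVG.trans hGW))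
    obtain ⟨S', hSS', hS'⟩ := exists_isAdmissible he hBd hB (hS.countable.union (hB b hb))
    exact ⟨(S', G'), ⟨hS', hG'o, hG'ne, hG'V.trans (hVG.trans hGW)⟩,
      ⟨subset_union_left.trans hSS', b, y, subset_union_right.trans hSS', hy, hgap⟩, hG'V⟩
  obtain ⟨x, p, -, hp⟩ := exists_mem_play_of_baireSpace Prod.snd I R (p₀ := (S₀, W))
    ⟨hS₀, hW, hWne, subset_rfl⟩ (fun p hp => ⟨hp.2.1, hp.2.2.1⟩) hanswer
  choose b y hb hy hgap using fun n => (hp n).1.2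
  have hlim := tendsto_uniformity_of_isEmbedding he (hf x)
    (tendsto_pi_uniformity_of_eventually_eq (eventually_apply_eq_of_eq_indicator
      (monotone_nat_of_le_succ fun n => (hp n).1.1) hy hb))
  obtain ⟨n, hn⟩ := Eventually.exists (f := atTop)
    (hlim (Metric.dist_mem_uniformity (by positivity : 0 < ε / 8)))
  have hn : |f (x, b n) - f (x, y n)| < ε / 8 := by simpa [Real.dist_eq] using hn
  exact (hgap n x (hp (n + 1)).2).not_gt hn

end Density

theorem namioka_of_valdivia_tilde_general {X Y T : Type*} [TopologicalSpace X] [BaireSpace X]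
    [TopologicalSpace Y] [CompactSpace Y]
    (e : Y → (T → ℝ)) (he : Topology.IsEmbedding e)
    (hsigma : Dense {y : Y | {t : T | e y t ≠ 0}.Countable})
    (f : X × Y → ℝ)
    (hf2 : ∀ x : X, Continuous fun y => f (x, y))
    (B₁ : Set Y) (hBdense : Dense B₁) (hBGδ : IsGδ B₁)
    (hBqc : ∀ b ∈ B₁, QuasiContinuous fun x : X => f (x, b)) :
    NamiokaProperty f := by
  have : T2Space Y := he.t2Space
  have hB : Dense (B₁ ∩ {y | (support (e y)).Countable}) :=
    hsigma.inter_of_isGδ_of_closure_range_subset (fun z hz _ hy =>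
      ((countable_range z).biUnion fun _ ⟨n, hn⟩ => hn ▸ hz n).mono
        (support_subset_of_mem_closure he.continuous hy)) hBdense hBGδ
  have hdense : ∀ n : ℕ, Dense (lowOscillationSet f (1 / (n + 1))) := fun n =>
    dense_lowOscillationSet he hf2 hB (fun b hb => hb.2) (fun b hb => hBqc b hb.1)
      Nat.one_div_pos_of_nat
  refine ⟨⋂ n : ℕ, lowOscillationSet f (1 / (n + 1)),
    dense_iInter_of_isOpen (fun _ => isOpen_lowOscillationSet _) hdense,
    .iInter_of_isOpen fun _ => isOpen_lowOscillationSet _, fun x hx y =>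
    continuousAt_of_forall_mem_lowOscillationSet (hf2 x) (fun ε hε => ?_) y⟩
  obtain ⟨n, hn⟩ := exists_nat_one_div_lt hε
  exact lowOscillationSet_mono hn.le (mem_iInter.1 hx n)

/-- Corollary 3.4: if `Y` is a Valdivia compact and `f : X × Y → ℝ` is
continuous in the second variable with quasi-continuous sections `f_b` for `b` in a dense
`Gδ` set `B₁`, then `f` has the Namioka property. -/
theorem namioka_of_valdivia_tilde {X Y T : Type*} [TopologicalSpace X] [BaireSpace X]
    [TopologicalSpace Y] [CompactSpace Y]
    (e : Y → (T → ℝ)) (he : Topology.IsEmbedding e)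
    (hcube : ∀ y t, e y t ∈ Set.Icc (0 : ℝ) 1)
    (hsigma : Dense {y : Y | {t : T | e y t ≠ 0}.Countable})
    (f : X × Y → ℝ)
    (hf2 : ∀ x : X, Continuous fun y => f (x, y))
    (B₁ : Set Y) (hBdense : Dense B₁) (hBGδ : IsGδ B₁)
    (hBqc : ∀ b ∈ B₁, QuasiContinuous fun x : X => f (x, b)) :
    NamiokaProperty f :=
  namioka_of_valdivia_tilde_general e he hsigma f hf2 B₁ hBdense hBGδ hBqc
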